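/- For every integer d ≥ 2, every ε ∈ (0,1), and every sufficiently large n with ε^{-d} ≤ c·n, there exists an n-point ultrametric space of doubling dimension at most d for which every (1+ε)-spanner has lightness Ω(ε^{-(d+1)}), where lightness is the ratio of the spanner's total edge weight to the MST weight. -/

import Mathlib

/-- The weight of a path (list of vertices): the sum of the weights of its
consecutive pairs, where the weight of a pair is its metric distance. -/
def pathWeight {X : Type*} (dX : X → X → ℝ) : List X → ℝ
  | [] => 0
  | [_] => 0
  | a :: b :: l => dX a b + pathWeight dX (b :: l)

/-- `G = (X,E)` (edge weights = distances) is a `t`-spanner of `(X,dX)`: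
every pair is joined by a path in `G` of weight at most `t` times its distance. -/
def IsSpanner {X : Type*} (dX : X → X → ℝ) (E : X → X → Prop) (t : ℝ) : Prop :=
  ∀ u v : X, ∃ p : List X, p.Chain' E ∧ p.head? = some u ∧ p.getLast? = some v ∧
    pathWeight dX p ≤ t * dX u v

open Classical in
/-- The total weight of the graph `(X,E)` with edge weights equal to distances
(each ordered pair counted once after dividing by 2). -/
noncomputable def graphWeight {X : Type*} [Fintype X] (dX : X → X → ℝ)
    (E : X → X → Prop) : ℝ :=
  (∑ u, ∑ v, if E u v then dX u v else 0) / 2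

/-! The space is a hierarchically separated tree: points carry codes with symbols below
`q = 2 ^ d`, and two points are at distance `2 ^ (-k)` when their codes first differ at position
`k`, an ultrametric of doubling constant `q`. Take `m = q ^ ℓ` leaves with `2 ^ ℓ ≈ 1 / ε`, so that
distinct leaves are more than `ε` apart. A `(1 + ε)`-path between points at distance `1` must
then use an edge of weight `1` running between their own two leaf clusters, so a spanner pays
`Ω(m²)`. The path through the points in order is connected and weighs `O(m 2 ^ (-ℓ))`, and so
does the minimum spanning tree. The ratio is `Ω(m 2 ^ ℓ) = Ω(ε ^ (-(d + 1)))`. -/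

section CodeDist

attribute [local instance] PiNat.dist

open PiNat

variable {X : Type*}

/-- `(1 / 2) ^ k`, where `k` is the first position at which the codes of `u` and `v` differ. -/
noncomputable def codeDist (c : X → ℕ → ℕ) (u v : X) : ℝ := dist (c u) (c v)

variable (c : X → ℕ → ℕ)

theorem codeDist_nonneg (u v : X) : 0 ≤ codeDist c u v := PiNat.dist_nonneg _ _

theorem codeDist_comm (u v : X) : codeDist c u v = codeDist c v u := PiNat.dist_comm _ _

theorem codeDist_self (u : X) : codeDist c u u = 0 := PiNat.dist_self _

theorem codeDist_le_max (u v w : X) :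
    codeDist c u w ≤ max (codeDist c u v) (codeDist c v w) :=
  dist_triangle_nonarch _ _ _

theorem codeDist_eq_zero_iff (hc : Function.Injective c) (u v : X) :
    codeDist c u v = 0 ↔ u = v :=
  ⟨fun h => hc (PiNat.eq_of_dist_eq_zero _ _ h), fun h => h ▸ codeDist_self c u⟩

theorem codeDist_le_pow_iff {u v : X} {k : ℕ} :
    codeDist c u v ≤ (1 / 2) ^ k ↔ ∀ i < k, c u i = c v i := by
  rw [codeDist, ← mem_cylinder_iff_dist_le, mem_cylinder_iff]

theorem apply_eq_of_codeDist_lt {u v : X} {k i : ℕ} (h : codeDist c u v < (1 / 2) ^ k)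
    (hi : i ≤ k) : c u i = c v i :=
  apply_eq_of_dist_lt h hi

theorem codeDist_eq_one {u v : X} (h : c u 0 ≠ c v 0) : codeDist c u v = 1 :=
  (PiNat.dist_le_one _ _).antisymm <| not_lt.1 fun hlt =>
    h (apply_eq_of_codeDist_lt c (k := 0) (by rw [pow_zero]; exact hlt) le_rfl)

theorem codeDist_eq_of_ne {u v : X} (h : c u ≠ c v) :
    codeDist c u v = (1 / 2) ^ firstDiff (c u) (c v) :=
  dist_eq_of_ne h

/-- The whole ball agrees with `x` below the coarsest scale `K` with `(1 / 2) ^ K ≤ r`, so one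
point for each value of the symbol at position `K` covers it at radius `(1 / 2) ^ (K + 1)`. -/
theorem codeDist_exists_half_cover [Fintype X] {q : ℕ} (hc : ∀ x i, c x i < q) (x : X) (r : ℝ) :
    ∃ s : Finset X, s.card ≤ q ∧ ∀ y, codeDist c x y ≤ r → ∃ z ∈ s, codeDist c z y ≤ r / 2 := by
  classical
  rcases le_or_gt r 0 with hr | hr
  · refine ⟨{x}, by simpa using Nat.one_le_of_lt (hc x 0), fun y hy =>
      ⟨x, Finset.mem_singleton_self x, ?_⟩⟩
    linarith
  obtain ⟨K, hK⟩ : ∃ K, (1 / 2 : ℝ) ^ K ≤ r ∧ ∀ y, codeDist c x y ≤ r → ∀ i < K, c x i = c y i := by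
    have hex : ∃ k, (1 / 2 : ℝ) ^ k ≤ r :=
      (exists_pow_lt_of_lt_one hr (by norm_num : (1 / 2 : ℝ) < 1)).imp fun _ => le_of_lt
    refine ⟨Nat.find hex, Nat.find_spec hex, fun y hy i hi => ?_⟩
    have hlt : r < (1 / 2) ^ (Nat.find hex - 1) := not_le.1 (Nat.find_min hex (by omega))
    exact apply_eq_of_codeDist_lt c (hy.trans_lt hlt) (by omega)
  set B := Finset.univ.filter fun y => codeDist c x y ≤ r
  obtain ⟨s, hsB, hinj, himage⟩ :=
    Finset.exists_subset_injOn_image_eq_of_surjOn (f := fun y => c y K) ↑B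
      (B.image fun y => c y K) (by rw [Finset.coe_image]; exact Set.surjOn_image _ _)
  refine ⟨s, ?_, fun y hy => ?_⟩
  · rw [← Finset.card_image_of_injOn hinj, himage]
    exact (Finset.card_le_card (t := Finset.range q) fun _ h => by
      obtain ⟨y, _, rfl⟩ := Finset.mem_image.1 h
      exact Finset.mem_range.2 (hc y K)).trans (Finset.card_range q).le
  obtain ⟨z, hzs, hzy⟩ : ∃ z ∈ s, c z K = c y K :=
    Finset.mem_image.1 (himage ▸ Finset.mem_image_of_mem _ (by simpa [B] using hy))
  have hzB : codeDist c x z ≤ r := by simpa [B] using hsB hzs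
  have hzy_close : codeDist c z y ≤ (1 / 2) ^ (K + 1) := (codeDist_le_pow_iff c).2 fun i hi => by
    rcases (Nat.lt_succ_iff_lt_or_eq.1 hi) with hi | rfl
    · rw [← hK.2 z hzB i hi, hK.2 y hy i hi]
    · exact hzy
  refine ⟨z, hzs, hzy_close.trans ?_⟩
  rw [pow_succ]
  linarith [hK.1]

end CodeDist

section Ultrametric

variable {X : Type*} {d : X → X → ℝ}

theorem le_pathWeight (hself : ∀ x, d x x = 0) (htri : ∀ x y z, d x z ≤ d x y + d y z) :
    ∀ {p : List X} {a b : X}, p.head? = some a → p.getLast? = some b → d a b ≤ pathWeight d p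
  | [], _, _, ha, _ => by simp at ha
  | [x], a, b, ha, hb => by
    obtain rfl : x = a := by simpa using ha
    obtain rfl : x = b := by simpa using hb
    simp [pathWeight, hself]
  | x :: y :: t, a, b, ha, hb => by
    obtain rfl : x = a := by simpa using ha
    have := le_pathWeight hself htri (p := y :: t) rfl (by rwa [List.getLast?_cons_cons] at hb)
    have := htri x y b
    simp only [pathWeight]
    linarith

theorem exists_edge_le_of_chain (hself : ∀ x, d x x = 0) (htri : ∀ x y z, d x z ≤ d x y + d y z)
    (hultra : ∀ x y z, d x z ≤ max (d x y) (d y z)) {E : X → X → Prop} :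
    ∀ {p : List X} {u v : X}, p.IsChain E → p.head? = some u → p.getLast? = some v → 0 < d u v →
      ∃ a b, E a b ∧ d u v ≤ d a b ∧ d u a + d a b + d b v ≤ pathWeight d p
  | [], _, _, _, hu, _, _ => by simp at hu
  | [x], u, v, _, hu, hv, hpos => by
    obtain rfl : x = u := by simpa using hu
    obtain rfl : x = v := by simpa using hv
    simp [hself] at hpos
  | x :: y :: t, u, v, hch, hu, hv, hpos => by
    obtain rfl : x = u := by simpa using hu
    obtain ⟨hxy, hch⟩ := List.isChain_cons_cons.1 hch
    have hv : (y :: t).getLast? = some v := by rwa [List.getLast?_cons_cons] at hv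
    have hpw : pathWeight d (x :: y :: t) = d x y + pathWeight d (y :: t) := rfl
    rcases le_or_gt (d x v) (d x y) with hfirst | hlater
    · have := le_pathWeight hself htri (p := y :: t) rfl hv
      exact ⟨x, y, hxy, hfirst, by rw [hself, hpw]; linarith⟩
    · have hyv : d x v ≤ d y v := (le_max_iff.1 (hultra x y v)).resolve_left hlater.not_ge
      obtain ⟨a, b, hab, hle, hsum⟩ :=
        exists_edge_le_of_chain hself htri hultra hch rfl hv (hpos.trans_le hyv)
      have := htri x y a
      exact ⟨a, b, hab, hyv.trans hle, by linarith⟩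

end Ultrametric

section GraphWeight

open SimpleGraph Finset

variable {X : Type*} [Fintype X] {d : X → X → ℝ}

theorem graphWeight_mono (hnn : ∀ x y, 0 ≤ d x y) {E F : X → X → Prop}
    (h : ∀ x y, E x y → F x y) : graphWeight d E ≤ graphWeight d F := by
  classical
  unfold graphWeight
  gcongr with x _ y _
  split_ifs with hE hF
  exacts [le_rfl, absurd (h x y hE) hF, hnn x y, le_rfl]

theorem graphWeight_le_of_connected (hnn : ∀ x y, 0 ≤ d x y) {T G : SimpleGraph X}
    (hT : ∀ T' : SimpleGraph X, T'.IsTree → graphWeight d T.Adj ≤ graphWeight d T'.Adj)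
    (hG : G.Connected) : graphWeight d T.Adj ≤ graphWeight d G.Adj := by
  obtain ⟨T', hle, htree⟩ := hG.exists_isTree_le
  exact (hT T' htree).trans (graphWeight_mono hnn fun _ _ h => hle h)

theorem graphWeight_pathGraph (w : ℕ → ℕ → ℝ) (hw : ∀ i j, w i j = w j i) (n : ℕ) :
    graphWeight (fun u v : Fin n => w u v) (pathGraph n).Adj =
      ∑ j ∈ range (n - 1), w j (j + 1) := by
  classical
  have hfin : ∀ F : ℕ → ℕ → ℝ,
      ∑ u : Fin n, ∑ v : Fin n, F u v = ∑ i ∈ range n, ∑ j ∈ range n, F i j := fun F => by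
    simp only [Fin.sum_univ_eq_sum_range (F _),
      Fin.sum_univ_eq_sum_range (fun i => ∑ j ∈ range n, F i j)]
  have hsplit : ∀ i j : ℕ, (if i + 1 = j ∨ j + 1 = i then w i j else 0) =
      (if i + 1 = j then w i j else 0) + (if j + 1 = i then w j i else 0) := fun i j => by
    split_ifs <;> first | omega | simp [hw]
  have hforward : ∑ i ∈ range n, ∑ j ∈ range n, (if i + 1 = j then w i j else 0) =
      ∑ j ∈ range (n - 1), w j (j + 1) := by
    simp only [sum_ite_eq, mem_range, ← sum_filter]
    congr 1
    ext j
    simp only [mem_filter, mem_range]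
    omega
  unfold graphWeight
  simp only [pathGraph_adj]
  rw [hfin fun i j => if i + 1 = j ∨ j + 1 = i then w i j else 0]
  simp only [hsplit, sum_add_distrib]
  rw [sum_comm (f := fun i j => if j + 1 = i then w j i else 0), hforward]
  ring

end GraphWeight

section Spanner

open Finset

variable {X ι : Type*} [Fintype X] {d : X → X → ℝ}

/-- A `(1 + ε)`-path from `u` to `v`, where `d u v = 1`, crosses an edge of weight at least `1`
whose ends are `ε`-close to `u` and `v`, hence lie in the clusters of `u` and `v`: distinct
cluster pairs get distinct heavy edges. -/
theorem card_le_two_mul_graphWeight (hnn : ∀ x y, 0 ≤ d x y) (hself : ∀ x, d x x = 0)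
    (hultra : ∀ x y z, d x z ≤ max (d x y) (d y z)) {E : X → X → Prop} {ε : ℝ}
    (hspan : IsSpanner d E (1 + ε)) (κ : X → ι) (hκ : ∀ x y, d x y ≤ ε → κ x = κ y)
    (P : Finset (ι × ι)) (hP : ∀ p ∈ P, ∃ u v, κ u = p.1 ∧ κ v = p.2 ∧ d u v = 1) :
    (P.card : ℝ) ≤ 2 * graphWeight d E := by
  classical
  have htri : ∀ x y z, d x z ≤ d x y + d y z := fun x y z =>
    (hultra x y z).trans (max_le_add_of_nonneg (hnn x y) (hnn y z))
  set heavy := univ.filter fun e : X × X => E e.1 e.2 ∧ 1 ≤ d e.1 e.2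
  have hcover : P ⊆ heavy.image fun e => (κ e.1, κ e.2) := by
    rintro ⟨i, j⟩ hp
    obtain ⟨u, v, rfl, rfl, huv⟩ := hP _ hp
    obtain ⟨path, hch, hu, hv, hw⟩ := hspan u v
    obtain ⟨a, b, hab, hle, hsum⟩ :=
      exists_edge_le_of_chain hself htri hultra hch hu hv (by rw [huv]; exact one_pos)
    rw [huv] at hle hw
    have hua := hnn u a
    have hbv := hnn b v
    refine mem_image.2 ⟨(a, b), by simp [heavy, hab, hle], ?_⟩
    rw [hκ u a (by linarith), hκ b v (by linarith)]
  calc (P.card : ℝ) ≤ heavy.card := by exact_mod_cast (card_le_card hcover).trans card_image_le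
    _ = ∑ e ∈ heavy, (1 : ℝ) := by simp
    _ ≤ ∑ e ∈ heavy, (if E e.1 e.2 then d e.1 e.2 else 0) :=
        sum_le_sum fun e he => by simp only [heavy, mem_filter] at he; simp [he.2.1, he.2.2]
    _ ≤ ∑ e : X × X, (if E e.1 e.2 then d e.1 e.2 else 0) :=
        sum_le_sum_of_subset_of_nonneg (subset_univ _) fun e _ _ => by
          split_ifs <;> simp [hnn]
    _ = 2 * graphWeight d E := by
        rw [graphWeight, Fintype.sum_prod_type]
        ring

end Spanner

section TreeCode

open Finset

theorem Nat.eq_of_div_pow_mod_eq {q ℓ a b : ℕ} (ha : a < q ^ ℓ) (hb : b < q ^ ℓ)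
    (h : ∀ k < ℓ, a / q ^ k % q = b / q ^ k % q) : a = b := by
  induction ℓ generalizing a b with
  | zero => simp only [pow_zero, Nat.lt_one_iff] at ha hb; rw [ha, hb]
  | succ ℓ ih =>
    rw [pow_succ'] at ha hb
    have hdiv : a / q = b / q := ih (Nat.div_lt_of_lt_mul ha) (Nat.div_lt_of_lt_mul hb)
      fun k hk => by simpa only [Nat.div_div_eq_div_mul, ← pow_succ'] using h (k + 1) (by omega)
    have hmod : a % q = b % q := by simpa using h 0 (by omega)
    rw [← Nat.div_add_mod a q, ← Nat.div_add_mod b q, hdiv, hmod]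

/-- Point `j` sits at the leaf `min j (q ^ ℓ - 1)` of the complete `q`-ary tree of depth `ℓ`,
spelled by its `ℓ` base-`q` digits from the most significant one; the surplus points all hang
below the last leaf, told apart by the marker at position `ℓ + j`. -/
def treeCode (q ℓ j : ℕ) (s : ℕ) : ℕ :=
  if s < ℓ then min j (q ^ ℓ - 1) / q ^ (ℓ - 1 - s) % q else if s = ℓ + j then 1 else 0

theorem treeCode_lt {q : ℕ} (hq : 1 < q) (ℓ j s : ℕ) : treeCode q ℓ j s < q := by
  unfold treeCode
  split_ifs
  exacts [Nat.mod_lt _ (by omega), hq, by omega]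

theorem treeCode_injective (q ℓ : ℕ) : Function.Injective (treeCode q ℓ) := by
  intro j j' h
  simpa [treeCode] using congrFun h (ℓ + j)

theorem leaf_eq_of_treeCode_eq {q ℓ j j' : ℕ} (hq : 0 < q)
    (h : ∀ s < ℓ, treeCode q ℓ j s = treeCode q ℓ j' s) :
    min j (q ^ ℓ - 1) = min j' (q ^ ℓ - 1) := by
  have hpos := Nat.one_le_iff_ne_zero.2 (pow_pos hq ℓ).ne'
  refine Nat.eq_of_div_pow_mod_eq (q := q) (ℓ := ℓ) (by omega) (by omega) fun k hk => ?_
  have := h (ℓ - 1 - k) (by omega)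
  simp only [treeCode, if_pos (show ℓ - 1 - k < ℓ by omega),
    show ℓ - 1 - (ℓ - 1 - k) = k by omega] at this
  exact this

theorem codeDist_treeCode_succ_le_of_lt {q ℓ j : ℕ} (hq : 0 < q) (hj : j + 1 < q ^ ℓ) :
    codeDist (treeCode q ℓ) j (j + 1) ≤
      2 * (1 / 2) ^ ℓ * ∑ k ∈ {k ∈ range ℓ | q ^ k ∣ j + 1}, (2 : ℝ) ^ k := by
  have hne : treeCode q ℓ j ≠ treeCode q ℓ (j + 1) := (treeCode_injective q ℓ).ne (by omega)
  have hf : PiNat.firstDiff (treeCode q ℓ j) (treeCode q ℓ (j + 1)) < ℓ := by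
    by_contra! h
    have := leaf_eq_of_treeCode_eq hq fun s hs => PiNat.apply_eq_of_lt_firstDiff (hs.trans_le h)
    omega
  have hdiff := PiNat.apply_firstDiff_ne hne
  rw [codeDist_eq_of_ne _ hne]
  generalize PiNat.firstDiff (treeCode q ℓ j) (treeCode q ℓ (j + 1)) = f at hf hdiff ⊢
  simp only [treeCode, if_pos hf, min_eq_left (show j ≤ q ^ ℓ - 1 by omega),
    min_eq_left (show j + 1 ≤ q ^ ℓ - 1 by omega)] at hdiff
  have hdvd : q ^ (ℓ - 1 - f) ∣ j + 1 := by
    by_contra h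
    exact hdiff (by rw [Nat.succ_div_of_not_dvd h])
  obtain ⟨k, rfl⟩ : ∃ k, ℓ = f + 1 + k := ⟨ℓ - 1 - f, by omega⟩
  rw [show f + 1 + k - 1 - f = k by omega] at hdvd
  calc (1 / 2 : ℝ) ^ f = 2 * (1 / 2) ^ (f + 1 + k) * 2 ^ k := by
        rw [pow_add, pow_add]
        field_simp
        rw [← mul_pow]
        norm_num
    _ ≤ _ := by
        gcongr
        exact single_le_sum (f := fun k => (2 : ℝ) ^ k) (fun _ _ => by positivity)
          (mem_filter.2 ⟨mem_range.2 (by omega), hdvd⟩)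

theorem codeDist_treeCode_succ_le_of_le {q ℓ j : ℕ} (hj : q ^ ℓ - 1 ≤ j) :
    codeDist (treeCode q ℓ) j (j + 1) ≤ (1 / 2) ^ (ℓ + j) := by
  refine (codeDist_le_pow_iff _).2 fun s hs => ?_
  simp only [treeCode, min_eq_right hj, min_eq_right (show q ^ ℓ - 1 ≤ j + 1 by omega)]
  split_ifs <;> omega

theorem sum_sum_filter_pow_dvd_le {q : ℕ} (hq : 4 ≤ q) (ℓ N : ℕ) :
    ∑ j ∈ range N, ∑ k ∈ {k ∈ range ℓ | q ^ k ∣ j + 1}, (2 : ℝ) ^ k ≤ 2 * N := by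
  have hcount : ∀ k, ∑ j ∈ range N, (if q ^ k ∣ j + 1 then (2 : ℝ) ^ k else 0) =
      ((N / q ^ k : ℕ) : ℝ) * 2 ^ k := fun k => by
    rw [← sum_filter, sum_const, Nat.card_multiples, nsmul_eq_mul]
  have hterm : ∀ k, ((N / q ^ k : ℕ) : ℝ) * 2 ^ k ≤ N * (1 / 2) ^ k := fun k => by
    calc ((N / q ^ k : ℕ) : ℝ) * 2 ^ k ≤ N / (q : ℝ) ^ k * 2 ^ k := by
          gcongr; exact_mod_cast Nat.cast_div_le
      _ ≤ N / 4 ^ k * 2 ^ k := by gcongr; exact_mod_cast hq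
      _ = N * (1 / 2) ^ k := by
          rw [show (4 : ℝ) ^ k = 2 ^ k * 2 ^ k by rw [← mul_pow]; norm_num]
          field_simp
          rw [mul_assoc, ← mul_pow]
          norm_num
  simp only [sum_filter]
  rw [sum_comm]
  calc ∑ k ∈ range ℓ, ∑ j ∈ range N, (if q ^ k ∣ j + 1 then (2 : ℝ) ^ k else 0)
      ≤ ∑ k ∈ range ℓ, N * (1 / 2 : ℝ) ^ k := sum_le_sum fun k _ => (hcount k).trans_le (hterm k)
    _ ≤ N * 2 := by rw [← mul_sum]; gcongr; exact sum_geometric_two_le ℓ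
    _ = 2 * N := mul_comm _ _

theorem sum_codeDist_treeCode_succ_le {q ℓ n : ℕ} (hq : 4 ≤ q) (hn : q ^ ℓ ≤ n) :
    ∑ j ∈ range (n - 1), codeDist (treeCode q ℓ) j (j + 1) ≤ 6 * q ^ ℓ * (1 / 2) ^ ℓ := by
  have hm : 1 ≤ q ^ ℓ := Nat.one_le_pow _ _ (by omega)
  have hjump : ∑ j ∈ range (q ^ ℓ - 1), codeDist (treeCode q ℓ) j (j + 1) ≤
      2 * (1 / 2) ^ ℓ * (2 * (q ^ ℓ - 1 : ℕ)) := by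
    calc _ ≤ ∑ j ∈ range (q ^ ℓ - 1),
          2 * (1 / 2) ^ ℓ * ∑ k ∈ {k ∈ range ℓ | q ^ k ∣ j + 1}, (2 : ℝ) ^ k :=
          sum_le_sum fun j hj => codeDist_treeCode_succ_le_of_lt (by omega)
            (by rw [mem_range] at hj; omega)
      _ ≤ _ := by rw [← mul_sum]; gcongr; exact sum_sum_filter_pow_dvd_le hq ℓ _
  have hintra : ∑ j ∈ Ico (q ^ ℓ - 1) (n - 1), codeDist (treeCode q ℓ) j (j + 1) ≤
      2 * (1 / 2) ^ ℓ := by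
    calc _ ≤ ∑ j ∈ Ico (q ^ ℓ - 1) (n - 1), (1 / 2 : ℝ) ^ ℓ * (1 / 2) ^ j :=
          sum_le_sum fun j hj => (pow_add (1 / 2 : ℝ) ℓ j) ▸
            codeDist_treeCode_succ_le_of_le (mem_Ico.1 hj).1
      _ ≤ ∑ j ∈ range (n - 1), (1 / 2 : ℝ) ^ ℓ * (1 / 2) ^ j :=
          sum_le_sum_of_subset_of_nonneg (fun j hj => by simp at hj ⊢; omega)
            fun _ _ _ => by positivity
      _ ≤ (1 / 2) ^ ℓ * 2 := by rw [← mul_sum]; gcongr; exact sum_geometric_two_le _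
      _ = 2 * (1 / 2) ^ ℓ := mul_comm _ _
  rw [← sum_range_add_sum_Ico _ (show q ^ ℓ - 1 ≤ n - 1 by omega)]
  have hcast : ((q ^ ℓ - 1 : ℕ) : ℝ) = (q : ℝ) ^ ℓ - 1 := by push_cast [Nat.cast_sub hm]; ring
  have hpos : (0 : ℝ) ≤ (1 / 2) ^ ℓ := by positivity
  have hm' : (1 : ℝ) ≤ (q : ℝ) ^ ℓ := by exact_mod_cast hm
  rw [hcast] at hjump
  nlinarith

end TreeCode

section LowerBound

open Finset

theorem sq_le_eight_mul_graphWeight {q ℓ n : ℕ} (hq : 2 ≤ q) (hqe : Even q) (hℓ : 1 ≤ ℓ)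
    (hn : q ^ ℓ ≤ n) {ε : ℝ} (hε : ε < (1 / 2) ^ (ℓ - 1)) {E : Fin n → Fin n → Prop}
    (hspan : IsSpanner (codeDist fun j : Fin n => treeCode q ℓ j) E (1 + ε)) :
    ((q : ℝ) ^ ℓ) ^ 2 ≤ 8 * graphWeight (codeDist fun j : Fin n => treeCode q ℓ j) E := by
  obtain ⟨p, rfl⟩ := hqe
  set Q := (p + p) ^ (ℓ - 1)
  have hm : (p + p) ^ ℓ = (p + p) * Q := by rw [← pow_succ']; congr 1; omega
  have hQ : 0 < Q := by positivity
  have hcard := card_le_two_mul_graphWeight (codeDist_nonneg _) (codeDist_self _)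
    (codeDist_le_max _) hspan (fun j : Fin n => min (j : ℕ) ((p + p) ^ ℓ - 1))
    (fun x y hxy => leaf_eq_of_treeCode_eq (by omega) fun s hs =>
      apply_eq_of_codeDist_lt _ (hxy.trans_lt hε) (show s ≤ ℓ - 1 by omega))
    (range (p * Q) ×ˢ Ico (p * Q) ((p + p) ^ ℓ)) ?_
  · have hhalf : (p + p) ^ ℓ - p * Q = p * Q := by rw [hm, add_mul, Nat.add_sub_cancel]
    rw [card_product, card_range, Nat.card_Ico, hhalf] at hcard
    have hsq : ((p + p : ℕ) : ℝ) ^ ℓ = 2 * (p * Q : ℕ) := by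
      rw [← Nat.cast_pow, hm]; push_cast; ring
    rw [hsq]
    push_cast at hcard ⊢
    nlinarith
  rintro ⟨a, b⟩ hab
  simp only [mem_product, mem_range, mem_Ico] at hab
  refine ⟨⟨a, by omega⟩, ⟨b, by omega⟩, by simp; omega, by simp; omega, codeDist_eq_one _ ?_⟩
  have htop : ∀ c < (p + p) ^ ℓ, treeCode (p + p) ℓ c 0 = c / Q := fun c hc => by
    simp only [treeCode, if_pos (show 0 < ℓ by omega), Nat.sub_zero,
      min_eq_left (show c ≤ (p + p) ^ ℓ - 1 by omega)]
    exact Nat.mod_eq_of_lt (Nat.div_lt_of_lt_mul (by rwa [mul_comm, ← hm]))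
  show treeCode (p + p) ℓ a 0 ≠ treeCode (p + p) ℓ b 0
  rw [htop a (by omega), htop b hab.2.2]
  have ha : a / Q < p := Nat.div_lt_of_lt_mul (by rw [mul_comm]; exact hab.1)
  have hb : p ≤ b / Q := (Nat.le_div_iff_mul_le hQ).2 hab.2.1
  omega

theorem graphWeight_treeCode_le_of_minimal {q ℓ n : ℕ} (hq : 4 ≤ q) (hn : q ^ ℓ ≤ n)
    {T : SimpleGraph (Fin n)}
    (hT : ∀ T' : SimpleGraph (Fin n), T'.IsTree →
      graphWeight (codeDist fun j : Fin n => treeCode q ℓ j) T.Adj ≤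
        graphWeight (codeDist fun j : Fin n => treeCode q ℓ j) T'.Adj) :
    graphWeight (codeDist fun j : Fin n => treeCode q ℓ j) T.Adj ≤ 6 * q ^ ℓ * (1 / 2) ^ ℓ := by
  obtain ⟨k, rfl⟩ : ∃ k, n = k + 1 := ⟨n - 1, by have := Nat.one_le_pow ℓ q (by omega); omega⟩
  calc _ ≤ _ :=
      graphWeight_le_of_connected (codeDist_nonneg _) hT (SimpleGraph.pathGraph_connected k)
    _ = _ := graphWeight_pathGraph _ (codeDist_comm _) _
    _ ≤ _ := sum_codeDist_treeCode_succ_le hq hn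

end LowerBound

theorem exists_two_pow_near_inv {ε : ℝ} (hε0 : 0 < ε) (hε1 : ε < 1) :
    ∃ ℓ : ℕ, 1 ≤ ℓ ∧ ε < (1 / 2) ^ (ℓ - 1) ∧ (2 : ℝ) ^ ℓ ≤ 2 * ε⁻¹ ∧ ε⁻¹ < 2 * 2 ^ ℓ := by
  have hinv : 1 < ε⁻¹ := one_lt_inv₀ hε0 |>.2 hε1
  obtain ⟨k, hk, hk'⟩ := exists_nat_pow_near hinv.le one_lt_two
  rcases k with _ | k
  · refine ⟨1, le_rfl, by simpa using hε1, by linarith, by linarith⟩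
  · refine ⟨k + 1, by omega, ?_, by linarith, by rwa [← pow_succ']⟩
    have : ε ≤ (1 / 2) ^ (k + 1) := by
      rw [one_div_pow, le_one_div hε0 (by positivity), one_div]
      exact hk
    exact this.trans_lt (pow_lt_pow_right_of_lt_one₀ (by norm_num) (by norm_num) (by omega))

/-- for every `d ≥ 2` there are constants `c₁, c₂ > 0` such that for
every `ε ∈ (0,1)` and all sufficiently large `n` with `ε⁻¹^d ≤ c₁·n`, there is an
`n`-point ultrametric space of doubling dimension at most `d` on which every
`(1+ε)`-spanner has lightness at least `c₂·ε⁻¹^(d+1)`: its weight is at least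
`c₂·ε⁻¹^(d+1)` times the weight of a minimum spanning tree. -/
theorem stmt13 (d : ℕ) (hd : 2 ≤ d) :
    ∃ c₁ c₂ : ℝ, 0 < c₁ ∧ 0 < c₂ ∧
    ∀ ε : ℝ, 0 < ε → ε < 1 → ∃ n₀ : ℕ, ∀ n : ℕ, n₀ ≤ n → ε⁻¹ ^ d ≤ c₁ * n →
    ∃ dX : Fin n → Fin n → ℝ,
      (∀ u v, 0 ≤ dX u v) ∧
      (∀ u v, dX u v = 0 ↔ u = v) ∧
      (∀ u v, dX u v = dX v u) ∧
      (∀ u v w, dX u w ≤ max (dX u v) (dX v w)) ∧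
      (∀ (x : Fin n) (r : ℝ), ∃ s : Finset (Fin n), s.card ≤ 2 ^ d ∧
        ∀ y, dX x y ≤ r → ∃ c ∈ s, dX c y ≤ r / 2) ∧
      (∀ E : Fin n → Fin n → Prop, Symmetric E → (∀ x, ¬ E x x) →
        IsSpanner dX E (1 + ε) →
        ∀ T : SimpleGraph (Fin n), T.IsTree →
          (∀ T' : SimpleGraph (Fin n), T'.IsTree →
            graphWeight dX T.Adj ≤ graphWeight dX T'.Adj) →
          c₂ * ε⁻¹ ^ (d + 1) * graphWeight dX T.Adj ≤ graphWeight dX E) := by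
  refine ⟨(1 / 2) ^ d, (1 / 2) ^ (d + 1) / 48, by positivity, by positivity,
    fun ε hε0 hε1 => ⟨0, fun n _ hn => ?_⟩⟩
  obtain ⟨ℓ, hℓ, hsep, hlow, hhigh⟩ := exists_two_pow_near_inv hε0 hε1
  have hq : 4 ≤ 2 ^ d := by simpa using Nat.pow_le_pow_right two_pos hd
  have hqℓ : ((2 ^ d : ℕ) : ℝ) ^ ℓ = ((2 : ℝ) ^ ℓ) ^ d := by push_cast; exact pow_right_comm _ _ _
  have hm : (2 ^ d) ^ ℓ ≤ n := by
    have : ((2 : ℝ) ^ ℓ) ^ d ≤ n := calc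
      ((2 : ℝ) ^ ℓ) ^ d ≤ (2 * ε⁻¹) ^ d := by gcongr
      _ = 2 ^ d * ε⁻¹ ^ d := mul_pow _ _ _
      _ ≤ 2 ^ d * ((1 / 2) ^ d * n) := by gcongr
      _ = n := by rw [← mul_assoc, ← mul_pow]; norm_num
    exact_mod_cast hqℓ ▸ this
  refine ⟨codeDist fun j : Fin n => treeCode (2 ^ d) ℓ j, codeDist_nonneg _,
    codeDist_eq_zero_iff _ ((treeCode_injective _ ℓ).comp Fin.val_injective), codeDist_comm _,
    codeDist_le_max _, codeDist_exists_half_cover _ fun _ => treeCode_lt (by omega) ℓ _,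
    fun E _ _ hspan T _ hT => ?_⟩
  have hE := sq_le_eight_mul_graphWeight (by omega) (Nat.even_pow.2 ⟨even_two, by omega⟩) hℓ hm
    hsep hspan
  have hTW := graphWeight_treeCode_le_of_minimal hq hm hT
  rw [hqℓ] at hE hTW
  calc (1 / 2) ^ (d + 1) / 48 * ε⁻¹ ^ (d + 1) * graphWeight _ T.Adj
      ≤ (1 / 2) ^ (d + 1) / 48 * ε⁻¹ ^ (d + 1) * (6 * ((2 : ℝ) ^ ℓ) ^ d * (1 / 2) ^ ℓ) := by gcongr
    _ ≤ (1 / 2) ^ (d + 1) / 48 * (2 * 2 ^ ℓ) ^ (d + 1) * (6 * ((2 : ℝ) ^ ℓ) ^ d * (1 / 2) ^ ℓ) := by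
        gcongr
    _ = (((2 : ℝ) ^ ℓ) ^ d) ^ 2 / 8 := by
        rw [one_div_pow, one_div_pow, mul_pow]
        field_simp
        ring
    _ ≤ _ := by linarith
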